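/- (Null-vector condition for the scalar-modified tensor.) Let R be an algebraic curvature tensor on ℝⁿ, let f ≥ 0 be a real number, and set R̃ := R − f·I. Assume R̃ has nonnegative complex sectional curvature, and suppose Z, W ∈ ℂⁿ satisfy R̃(Z, W, Z̄, W̄) = 0. Then Q(R)(Z, W, Z̄, W̄) is a real number and Q(R)(Z, W, Z̄, W̄) ≥ 0. -/

import Mathlib

open Complex

noncomputable section

/-- An algebraic curvature tensor on `ℝⁿ`, given by its coefficients on the
standard basis, satisfying the usual symmetries and the first Bianchi identity.
(A multilinear map `(ℝⁿ)⁴ → ℝ` with these symmetries is equivalent to such data.) -/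
structure AlgCurv (n : ℕ) where
  R : Fin n → Fin n → Fin n → Fin n → ℝ
  skew₁ : ∀ i j k l, R i j k l = - R j i k l
  skew₂ : ∀ i j k l, R i j k l = - R i j l k
  pair_symm : ∀ i j k l, R i j k l = R k l i j
  bianchi : ∀ i j k l, R i j k l + R j k i l + R k i j l = 0

namespace AlgCurv

variable {n : ℕ}

/-- The multilinear map `(ℝⁿ)⁴ → ℝ` determined by the coefficients. -/
def evalR (T : AlgCurv n) (X Y U V : Fin n → ℝ) : ℝ :=
  ∑ i : Fin n, ∑ j : Fin n, ∑ k : Fin n, ∑ l : Fin n,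
    T.R i j k l * X i * Y j * U k * V l

/-- The `ℂ`-multilinear extension to `ℂⁿ = Fin n → ℂ`. -/
def evalC (T : AlgCurv n) (Z W U V : Fin n → ℂ) : ℂ :=
  ∑ i : Fin n, ∑ j : Fin n, ∑ k : Fin n, ∑ l : Fin n,
    (T.R i j k l : ℂ) * Z i * W j * U k * V l

end AlgCurv

/-- The standard (real) inner product on `ℝⁿ`. -/
def rInner {n : ℕ} (X Y : Fin n → ℝ) : ℝ := ∑ i : Fin n, X i * Y i

/-- The `ℂ`-bilinear (not hermitian) extension `⟨Z,W⟩ = Σᵢ Zᵢ Wᵢ`. -/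
def cInner {n : ℕ} (Z W : Fin n → ℂ) : ℂ := ∑ i : Fin n, Z i * W i

/-- Entrywise complex conjugation. -/
def conjV {n : ℕ} (Z : Fin n → ℂ) : Fin n → ℂ := fun i => starRingEnd ℂ (Z i)

/-- `R` has nonnegative complex sectional curvature: `R(Z,W,Z̄,W̄)` is a
nonnegative real number for all `Z, W ∈ ℂⁿ`. -/
def nonnegCSC {n : ℕ} (T : AlgCurv n) : Prop :=
  ∀ Z W : Fin n → ℂ, ∃ r : ℝ, 0 ≤ r ∧
    T.evalC Z W (conjV Z) (conjV W) = (r : ℂ)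

/-- The complexified vector `X + iY`. -/
def cx {n : ℕ} (X Y : Fin n → ℝ) : Fin n → ℂ :=
  fun i => (X i : ℂ) + Complex.I * (Y i : ℂ)

/-- The `ℂ`-multilinear extension of the curvature tensor of constant curvature one,
`I(X,Y,Z,W) = ⟨X,Z⟩⟨Y,W⟩ − ⟨X,W⟩⟨Y,Z⟩`. -/
def IC {n : ℕ} (Z W U V : Fin n → ℂ) : ℂ :=
  cInner Z U * cInner W V - cInner Z V * cInner W U

/-- The `p`-th standard basis vector of `ℂⁿ`. -/
def basisC {n : ℕ} (p : Fin n) : Fin n → ℂ := fun i => if i = p then 1 else 0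

/-- Hamilton's reaction term `Q(R)`, evaluated on `(Z, W, U, V)`
(with `U = Z̄`, `V = W̄` in applications). -/
def Qr {n : ℕ} (T : AlgCurv n) (Z W U V : Fin n → ℂ) : ℂ :=
  (∑ p : Fin n, ∑ q : Fin n,
      T.evalC Z W (basisC p) (basisC q) * T.evalC U V (basisC p) (basisC q))
  + 2 * (∑ p : Fin n, ∑ q : Fin n,
      T.evalC Z (basisC p) U (basisC q) * T.evalC W (basisC p) V (basisC q))
  - 2 * (∑ p : Fin n, ∑ q : Fin n,
      T.evalC Z (basisC p) V (basisC q) * T.evalC W (basisC p) U (basisC q))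

/-- The `ℂ`-linear extension of a real matrix (endomorphism of `ℝⁿ`) acting on `ℂⁿ`. -/
def mulVecC {n : ℕ} (A : Matrix (Fin n) (Fin n) ℝ) (Z : Fin n → ℂ) : Fin n → ℂ :=
  fun i => ∑ j : Fin n, (A i j : ℂ) * Z j

/-- `(A ∧ id)(Z, W, Z̄, W̄)`. -/
def wedgeId {n : ℕ} (A : Matrix (Fin n) (Fin n) ℝ) (Z W : Fin n → ℂ) : ℂ :=
  (1/2 : ℂ) * (cInner (mulVecC A Z) (conjV Z) * cInner W (conjV W)
             + cInner (mulVecC A W) (conjV W) * cInner Z (conjV Z))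
  - (1/2 : ℂ) * (cInner (mulVecC A W) (conjV Z) * cInner Z (conjV W)
               + cInner (mulVecC A Z) (conjV W) * cInner W (conjV Z))

/-- The Ricci curvature of `R`, as a matrix:  `⟨Ric(R)(X), Y⟩ = Σ_p R(X, e_p, Y, e_p)`. -/
def ricM {n : ℕ} (T : AlgCurv n) : Matrix (Fin n) (Fin n) ℝ :=
  Matrix.of fun i j => ∑ p : Fin n, T.R i p j p

/-!
Put `S = R - f I`. Since `S(Z', W', Z̄', W̄') ≥ 0` everywhere and vanishes at `(Z, W)`, the
`c c̄`-coefficient of `S(Z + c a, W + c b, ·̄, ·̄)`, a Hermitian form in `(a, b)`, is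
nonnegative. For `I` the same form is `½ Σ_{p,q} |(a ∧ W + Z ∧ b)_{pq}|²`, so with `f ≥ 0` it
is positive semidefinite for `R = S + f I` as well. Factor its matrix as `Gᴴ G` and split the
columns of `G` into blocks `X, Y`: the two last sums of `Q(R)` become
`tr((σ - σᵀ)(σ - σᵀ)ᴴ)` with `σ = X Yᵀ`, while the first sum is `Σ_{p,q} |R(Z, W, e_p, e_q)|²`.
-/
open scoped ComplexOrder
open Matrix

namespace Matrix

variable {ι κ : Type*} [Fintype ι] [Fintype κ]

lemma trace_gram_mul_transpose_gram (X Y : Matrix κ ι ℂ) :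
    trace (Xᴴ * X * (Yᴴ * Y)ᵀ) = trace (X * Yᵀ * (X * Yᵀ)ᴴ) := by
  rw [transpose_mul, conjTranspose_mul, ← conjTranspose_transpose_eq_transpose_conjTranspose]
  simp only [Matrix.mul_assoc]
  rw [trace_mul_comm Xᴴ]
  simp only [Matrix.mul_assoc]

lemma trace_gram_mul_transpose_gram_swap (X Y : Matrix κ ι ℂ) :
    trace (Xᴴ * Y * (Yᴴ * X)ᵀ) = trace ((X * Yᵀ)ᵀ * (X * Yᵀ)ᴴ) := by
  rw [transpose_mul, transpose_mul, conjTranspose_mul,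
    ← conjTranspose_transpose_eq_transpose_conjTranspose, transpose_transpose]
  simp only [Matrix.mul_assoc]
  rw [trace_mul_comm Xᴴ]
  simp only [Matrix.mul_assoc]

lemma trace_gram_sub_trace_gram_swap_nonneg (X Y : Matrix κ ι ℂ) :
    0 ≤ trace (Xᴴ * X * (Yᴴ * Y)ᵀ) - trace (Xᴴ * Y * (Yᴴ * X)ᵀ) := by
  set σ := X * Yᵀ
  have hσσ : trace (σᵀ * σᵀᴴ) = trace (σ * σᴴ) := by
    rw [← trace_transpose, transpose_mul, conjTranspose_transpose_eq_transpose_conjTranspose,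
      transpose_transpose, transpose_transpose, trace_mul_comm]
  have hσσ' : trace (σ * σᵀᴴ) = trace (σᵀ * σᴴ) := by
    rw [← trace_transpose, transpose_mul, conjTranspose_transpose_eq_transpose_conjTranspose,
      transpose_transpose, trace_mul_comm]
  have key : trace (Xᴴ * X * (Yᴴ * Y)ᵀ) - trace (Xᴴ * Y * (Yᴴ * X)ᵀ)
      = (1 / 2 : ℂ) * trace ((σ - σᵀ) * (σ - σᵀ)ᴴ) := by
    rw [trace_gram_mul_transpose_gram, trace_gram_mul_transpose_gram_swap]
    simp only [conjTranspose_sub, sub_mul, mul_sub, trace_sub, hσσ, hσσ']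
    ring
  rw [key]
  exact mul_nonneg (by positivity) (posSemidef_self_mul_conjTranspose _).trace_nonneg

open scoped MatrixOrder in
lemma PosSemidef.trace_mul_transpose_sub_nonneg [DecidableEq ι] {A B C D : Matrix ι ι ℂ}
    (h : (fromBlocks A B C D).PosSemidef) : 0 ≤ trace (A * Dᵀ) - trace (B * Cᵀ) := by
  obtain ⟨G, hG⟩ := CStarAlgebra.nonneg_iff_eq_star_mul_self.mp h.nonneg
  rw [← fromCols_toCols G, star_eq_conjTranspose,
    conjTranspose_fromCols_eq_fromRows_conjTranspose, fromRows_mul_fromCols] at hG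
  obtain ⟨rfl, rfl, rfl, rfl⟩ := fromBlocks_inj.mp hG
  exact trace_gram_sub_trace_gram_swap_nonneg _ _

end Matrix

open Filter Topology in
lemma Complex.nonneg_of_forall_pos_add_mul_nonneg {x y : ℂ}
    (h : ∀ t : ℝ, 0 < t → 0 ≤ x + t * y) : 0 ≤ x := by
  have hlim : Tendsto (fun t : ℝ => x + t * y) (𝓝[>] 0) (𝓝 x) := by
    have hcont : Continuous fun t : ℝ => x + t * y := by fun_prop
    simpa using hcont.continuousWithinAt.tendsto (x := 0) (s := Set.Ioi 0)
  exact ge_of_tendsto hlim (eventually_nhdsWithin_of_forall h)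

lemma conjV_conjV {n : ℕ} (X : Fin n → ℂ) : conjV (conjV X) = X := by
  funext i; simp [conjV]

lemma conjV_basisC {n : ℕ} (p : Fin n) : conjV (basisC p) = basisC p := by
  funext i; by_cases h : i = p <;> simp [conjV, basisC, h]

lemma conjV_add_smul {n : ℕ} (X Y : Fin n → ℂ) (c : ℂ) :
    conjV (X + c • Y) = conjV X + starRingEnd ℂ c • conjV Y := by
  funext i; simp [conjV]

lemma two_mul_IC {n : ℕ} (X Y U V : Fin n → ℂ) :
    2 * IC X Y U V = ∑ p, ∑ q, (X p * Y q - X q * Y p) * (U p * V q - U q * V p) := by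
  have expand : ∀ p q, (X p * Y q - X q * Y p) * (U p * V q - U q * V p)
      = X p * U p * (Y q * V q) - X p * V p * (Y q * U q) - X q * V q * (Y p * U p)
        + X q * U q * (Y p * V p) := fun _ _ => by ring
  simp only [expand, Finset.sum_add_distrib, Finset.sum_sub_distrib]
  rw [Finset.sum_comm (f := fun p q => X q * V q * (Y p * U p)),
    Finset.sum_comm (f := fun p q => X q * U q * (Y p * V p))]
  simp only [IC, cInner, Finset.sum_mul_sum]
  ring

namespace AlgCurv

variable {n : ℕ}

instance : Sub (AlgCurv n) where
  sub S T :=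
    { R := fun i j k l => S.R i j k l - T.R i j k l
      skew₁ := fun i j k l => by linarith [S.skew₁ i j k l, T.skew₁ i j k l]
      skew₂ := fun i j k l => by linarith [S.skew₂ i j k l, T.skew₂ i j k l]
      pair_symm := fun i j k l => by linarith [S.pair_symm i j k l, T.pair_symm i j k l]
      bianchi := fun i j k l => by linarith [S.bianchi i j k l, T.bianchi i j k l] }

instance : SMul ℝ (AlgCurv n) where
  smul f T :=
    { R := fun i j k l => f * T.R i j k l
      skew₁ := fun i j k l => by rw [T.skew₁]; ring
      skew₂ := fun i j k l => by rw [T.skew₂]; ring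
      pair_symm := fun i j k l => by rw [T.pair_symm]
      bianchi := fun i j k l => by linear_combination f * T.bianchi i j k l }

@[simp] lemma sub_R (S T : AlgCurv n) (i j k l : Fin n) :
    (S - T).R i j k l = S.R i j k l - T.R i j k l := rfl

@[simp] lemma smul_R (f : ℝ) (T : AlgCurv n) (i j k l : Fin n) :
    (f • T).R i j k l = f * T.R i j k l := rfl

/-- The tensor `I` of constant curvature one. -/
def constCurv : AlgCurv n where
  R i j k l := (if i = k then 1 else 0) * (if j = l then 1 else 0)
    - (if i = l then 1 else 0) * (if j = k then 1 else 0)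
  skew₁ i j k l := by ring
  skew₂ i j k l := by ring
  pair_symm i j k l := by
    simp only [@eq_comm _ k i, @eq_comm _ l j, @eq_comm _ k j, @eq_comm _ l i]; ring
  bianchi i j k l := by simp only [@eq_comm _ k i, @eq_comm _ j i, @eq_comm _ k j]; ring

lemma evalC_sub (S T : AlgCurv n) (X Y U V : Fin n → ℂ) :
    (S - T).evalC X Y U V = S.evalC X Y U V - T.evalC X Y U V := by
  simp only [evalC, ← Finset.sum_sub_distrib, sub_R]
  congr! 4
  push_cast; ring

lemma evalC_smul (f : ℝ) (T : AlgCurv n) (X Y U V : Fin n → ℂ) :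
    (f • T).evalC X Y U V = f * T.evalC X Y U V := by
  simp only [evalC, Finset.mul_sum, smul_R]
  congr! 4
  push_cast; ring

lemma evalC_constCurv (X Y U V : Fin n → ℂ) : constCurv.evalC X Y U V = IC X Y U V := by
  simp only [evalC, constCurv, Complex.ofReal_sub, Complex.ofReal_mul, sub_mul,
    Finset.sum_sub_distrib]
  simp only [apply_ite Complex.ofReal, Complex.ofReal_one, Complex.ofReal_zero, ite_mul, one_mul,
    zero_mul, Finset.sum_ite_irrel, Finset.sum_const_zero, Finset.sum_ite_eq, Finset.mem_univ,
    if_true]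
  simp only [IC, cInner, Finset.sum_mul_sum]
  congr 1 <;> exact Finset.sum_congr rfl fun _ _ => Finset.sum_congr rfl fun _ _ => by ring

variable (T : AlgCurv n)

lemma evalC_conjV (X Y U V : Fin n → ℂ) :
    T.evalC (conjV X) (conjV Y) (conjV U) (conjV V) = starRingEnd ℂ (T.evalC X Y U V) := by
  simp [evalC, conjV]

lemma evalC_swap_left (X Y U V : Fin n → ℂ) : T.evalC Y X U V = -T.evalC X Y U V := by
  rw [evalC, Finset.sum_comm, evalC]
  simp only [← Finset.sum_neg_distrib]
  refine Finset.sum_congr rfl fun i _ => Finset.sum_congr rfl fun j _ =>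
    Finset.sum_congr rfl fun k _ => Finset.sum_congr rfl fun l _ => ?_
  rw [T.skew₁]; push_cast; ring

lemma evalC_swap_right (X Y U V : Fin n → ℂ) : T.evalC X Y V U = -T.evalC X Y U V := by
  simp only [evalC, ← Finset.sum_neg_distrib]
  refine Finset.sum_congr rfl fun i _ => Finset.sum_congr rfl fun j _ => ?_
  rw [Finset.sum_comm]
  refine Finset.sum_congr rfl fun k _ => Finset.sum_congr rfl fun l _ => ?_
  rw [T.skew₂]; push_cast; ring

lemma evalC_swap_pairs (X Y U V : Fin n → ℂ) : T.evalC U V X Y = T.evalC X Y U V := by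
  simp only [evalC]
  conv_lhs => enter [2, i]; rw [Finset.sum_comm]; enter [2, k]; rw [Finset.sum_comm]
  conv_lhs => rw [Finset.sum_comm]; enter [2, k]; rw [Finset.sum_comm]
  refine Finset.sum_congr rfl fun i _ => Finset.sum_congr rfl fun j _ =>
    Finset.sum_congr rfl fun k _ => Finset.sum_congr rfl fun l _ => ?_
  rw [T.pair_symm]; ring

lemma evalC_add_smul₁ (X X' Y U V : Fin n → ℂ) (c : ℂ) :
    T.evalC (X + c • X') Y U V = T.evalC X Y U V + c * T.evalC X' Y U V := by
  simp only [evalC, Finset.mul_sum, ← Finset.sum_add_distrib, Pi.add_apply, Pi.smul_apply,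
    smul_eq_mul]
  congr! 4; ring

lemma evalC_add_smul₂ (X Y Y' U V : Fin n → ℂ) (c : ℂ) :
    T.evalC X (Y + c • Y') U V = T.evalC X Y U V + c * T.evalC X Y' U V := by
  simp only [evalC, Finset.mul_sum, ← Finset.sum_add_distrib, Pi.add_apply, Pi.smul_apply,
    smul_eq_mul]
  congr! 4; ring

lemma evalC_add_smul₃ (X Y U U' V : Fin n → ℂ) (c : ℂ) :
    T.evalC X Y (U + c • U') V = T.evalC X Y U V + c * T.evalC X Y U' V := by
  simp only [evalC, Finset.mul_sum, ← Finset.sum_add_distrib, Pi.add_apply, Pi.smul_apply,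
    smul_eq_mul]
  congr! 4; ring

lemma evalC_add_smul₄ (X Y U V V' : Fin n → ℂ) (c : ℂ) :
    T.evalC X Y U (V + c • V') = T.evalC X Y U V + c * T.evalC X Y U V' := by
  simp only [evalC, Finset.mul_sum, ← Finset.sum_add_distrib, Pi.add_apply, Pi.smul_apply,
    smul_eq_mul]
  congr! 4; ring

def complexSectional (Z W : Fin n → ℂ) : ℂ := T.evalC Z W (conjV Z) (conjV W)

lemma complexSectional_nonneg {T : AlgCurv n} (hT : nonnegCSC T) (Z W : Fin n → ℂ) :
    0 ≤ T.complexSectional Z W := by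
  obtain ⟨r, hr, e⟩ := hT Z W
  rw [complexSectional, e]
  exact Complex.zero_le_real.mpr hr

/-- The coefficient of `c c̄` in `T.complexSectional (Z + c • a) (W + c • b)`. -/
def secondVariation (Z W a b : Fin n → ℂ) : ℂ :=
  T.evalC a W (conjV a) (conjV W) + T.evalC a W (conjV Z) (conjV b)
    + T.evalC Z b (conjV a) (conjV W) + T.evalC Z b (conjV Z) (conjV b)

/-- Averaging over `c ∈ {t, -t, i t, -i t}` kills every term of the expansion except those
of bidegree `(0,0)`, `(1,1)` and `(2,2)` in `(c, c̄)`. -/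
lemma sum_complexSectional_rotate (Z W a b : Fin n → ℂ) (t : ℝ) :
    ∑ k ∈ Finset.range 4, T.complexSectional (Z + (I ^ k * t) • a) (W + (I ^ k * t) • b)
      = 4 * T.complexSectional Z W
        + 4 * t ^ 2 * (T.secondVariation Z W a b + t ^ 2 * T.complexSectional a b) := by
  simp only [Finset.sum_range_succ, Finset.sum_range_zero, zero_add, pow_zero, pow_one, I_sq,
    I_pow_three, complexSectional, secondVariation, conjV_add_smul, evalC_add_smul₁,
    evalC_add_smul₂, evalC_add_smul₃, evalC_add_smul₄, map_mul, map_neg, map_one, conj_I,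
    conj_ofReal]
  ring_nf
  simp only [I_sq, I_pow_four]
  ring

lemma secondVariation_nonneg_of_complexSectional_eq_zero {T : AlgCurv n} (hT : nonnegCSC T)
    {Z W : Fin n → ℂ} (h0 : T.complexSectional Z W = 0) (a b : Fin n → ℂ) :
    0 ≤ T.secondVariation Z W a b := by
  refine Complex.nonneg_of_forall_pos_add_mul_nonneg (y := T.complexSectional a b) fun s hs => ?_
  obtain ⟨t, ht, rfl⟩ : ∃ t : ℝ, 0 < t ∧ t ^ 2 = s :=
    ⟨√s, Real.sqrt_pos.2 hs, Real.sq_sqrt hs.le⟩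
  have hsum := T.sum_complexSectional_rotate Z W a b t
  rw [h0, mul_zero, zero_add] at hsum
  have h4t : (0 : ℂ) < 4 * t ^ 2 := by exact_mod_cast (by positivity : (0 : ℝ) < 4 * t ^ 2)
  refine le_of_mul_le_mul_left ?_ h4t
  rw [mul_zero, Complex.ofReal_pow, ← hsum]
  exact Finset.sum_nonneg fun k _ => complexSectional_nonneg hT _ _

lemma secondVariation_constCurv_nonneg (Z W a b : Fin n → ℂ) :
    0 ≤ constCurv.secondVariation Z W a b := by
  set w : Fin n → Fin n → ℂ := fun p q => a p * W q - a q * W p + (Z p * b q - Z q * b p)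
  have h2 : 2 * constCurv.secondVariation Z W a b = ∑ p, ∑ q, w p q * star (w p q) := by
    simp only [secondVariation, evalC_constCurv, mul_add, two_mul_IC, ← Finset.sum_add_distrib]
    refine Finset.sum_congr rfl fun p _ => Finset.sum_congr rfl fun q _ => ?_
    simp only [w, conjV, star_add, star_sub, star_mul', Complex.star_def]
    ring
  refine le_of_mul_le_mul_left ?_ (two_pos : (0 : ℂ) < 2)
  rw [mul_zero, h2]
  exact Finset.sum_nonneg fun p _ => Finset.sum_nonneg fun q _ => mul_star_self_nonneg _

lemma secondVariation_sub (S T : AlgCurv n) (Z W a b : Fin n → ℂ) :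
    (S - T).secondVariation Z W a b = S.secondVariation Z W a b - T.secondVariation Z W a b := by
  simp only [secondVariation, evalC_sub]
  ring

lemma secondVariation_smul (f : ℝ) (Z W a b : Fin n → ℂ) :
    (f • T).secondVariation Z W a b = f * T.secondVariation Z W a b := by
  simp only [secondVariation, evalC_smul]
  ring

lemma evalC_basisC (X U : Fin n → ℂ) (p q : Fin n) :
    T.evalC X (basisC p) U (basisC q) = ∑ i, ∑ k, (T.R i p k q : ℂ) * X i * U k := by
  simp [evalC, basisC]

def formMatrix (X U : Fin n → ℂ) : Matrix (Fin n) (Fin n) ℂ :=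
  Matrix.of fun q p => T.evalC X (basisC p) U (basisC q)

@[simp] lemma formMatrix_apply (X U : Fin n → ℂ) (q p : Fin n) :
    T.formMatrix X U q p = T.evalC X (basisC p) U (basisC q) := rfl

lemma evalC_eq_dotProduct_mulVec (X Y U V : Fin n → ℂ) :
    T.evalC X Y U V = V ⬝ᵥ (T.formMatrix X U *ᵥ Y) := by
  simp only [formMatrix_apply, evalC_basisC, dotProduct, mulVec, Finset.mul_sum, Finset.sum_mul]
  rw [evalC]
  conv_rhs =>
    rw [Finset.sum_comm]; enter [2, j]; rw [Finset.sum_comm]; enter [2, i]; rw [Finset.sum_comm]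
  rw [Finset.sum_comm]
  refine Finset.sum_congr rfl fun i _ => Finset.sum_congr rfl fun j _ =>
    Finset.sum_congr rfl fun k _ => Finset.sum_congr rfl fun l _ => by ring

lemma formMatrix_conjTranspose (X U : Fin n → ℂ) :
    (T.formMatrix X U)ᴴ = T.formMatrix (conjV U) (conjV X) := by
  ext q p
  simp only [formMatrix_apply, conjTranspose_apply, Complex.star_def, ← evalC_conjV, conjV_basisC]
  exact T.evalC_swap_pairs _ _ _ _

def complexHessian (Z W : Fin n → ℂ) : Matrix (Fin n ⊕ Fin n) (Fin n ⊕ Fin n) ℂ :=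
  fromBlocks (T.formMatrix Z (conjV Z)) (-T.formMatrix W (conjV Z))
    (-T.formMatrix Z (conjV W)) (T.formMatrix W (conjV W))

lemma complexHessian_isHermitian (Z W : Fin n → ℂ) : (T.complexHessian Z W).IsHermitian := by
  refine IsHermitian.fromBlocks ?_ ?_ ?_
  · rw [IsHermitian, formMatrix_conjTranspose, conjV_conjV]
  · rw [conjTranspose_neg, formMatrix_conjTranspose, conjV_conjV]
  · rw [IsHermitian, formMatrix_conjTranspose, conjV_conjV]

lemma dotProduct_complexHessian_mulVec (Z W : Fin n → ℂ) (x : Fin n ⊕ Fin n → ℂ) :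
    star x ⬝ᵥ (T.complexHessian Z W *ᵥ x)
      = T.secondVariation Z W (x ∘ Sum.inr) (x ∘ Sum.inl) := by
  have hstar : ∀ e : Fin n → Fin n ⊕ Fin n, star x ∘ e = conjV (x ∘ e) := fun _ => rfl
  simp only [complexHessian, fromBlocks_mulVec, dotProduct_block, Sum.elim_comp_inl,
    Sum.elim_comp_inr, dotProduct_add, neg_mulVec, dotProduct_neg, hstar,
    ← evalC_eq_dotProduct_mulVec, secondVariation]
  set a := x ∘ Sum.inr
  set b := x ∘ Sum.inl
  linear_combination -T.evalC_swap_left W a (conjV Z) (conjV b)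
    - T.evalC_swap_right Z b (conjV W) (conjV a) + T.evalC_swap_left a W (conjV W) (conjV a)
    - T.evalC_swap_right a W (conjV a) (conjV W)

lemma posSemidef_complexHessian {Z W : Fin n → ℂ}
    (h : ∀ a b, 0 ≤ T.secondVariation Z W a b) :
    (T.complexHessian Z W).PosSemidef :=
  .of_dotProduct_mulVec_nonneg (T.complexHessian_isHermitian Z W) fun x => by
    rw [dotProduct_complexHessian_mulVec]
    exact h _ _

lemma Qr_conjV_eq (Z W : Fin n → ℂ) :
    Qr T Z W (conjV Z) (conjV W)
      = ∑ p, ∑ q, T.evalC Z W (basisC p) (basisC q) * star (T.evalC Z W (basisC p) (basisC q))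
        + 2 * (trace (T.formMatrix Z (conjV Z) * (T.formMatrix W (conjV W))ᵀ)
          - trace (T.formMatrix W (conjV Z) * (T.formMatrix Z (conjV W))ᵀ)) := by
  have hconj : ∀ p q : Fin n, T.evalC (conjV Z) (conjV W) (basisC p) (basisC q)
      = star (T.evalC Z W (basisC p) (basisC q)) := fun p q => by
    rw [← conjV_basisC p, ← conjV_basisC q, evalC_conjV, conjV_basisC, conjV_basisC]; rfl
  simp only [Qr, hconj, trace, diag, mul_apply, transpose_apply, formMatrix_apply]
  rw [Finset.sum_comm (f := fun q p => T.evalC Z (basisC p) (conjV Z) (basisC q) * _),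
    Finset.sum_comm (f := fun q p => T.evalC W (basisC p) (conjV Z) (basisC q) * _)]
  simp only [mul_comm (T.evalC W _ (conjV Z) _)]
  ring

lemma Qr_conjV_nonneg_of_posSemidef {Z W : Fin n → ℂ} (h : (T.complexHessian Z W).PosSemidef) :
    0 ≤ Qr T Z W (conjV Z) (conjV W) := by
  have hblocks := h.trace_mul_transpose_sub_nonneg
  rw [transpose_neg, neg_mul_neg] at hblocks
  rw [Qr_conjV_eq]
  exact add_nonneg
    (Finset.sum_nonneg fun p _ => Finset.sum_nonneg fun q _ => mul_star_self_nonneg _)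
    (mul_nonneg zero_le_two hblocks)

end AlgCurv

/-- null-vector condition for the scalar-modified tensor
`R̃ = R − f I`. -/
theorem null_vector_Q_modified {n : ℕ} (T : AlgCurv n) (f : ℝ) (hf : 0 ≤ f)
    (hT : ∀ Z W : Fin n → ℂ, ∃ r : ℝ, 0 ≤ r ∧
      T.evalC Z W (conjV Z) (conjV W) - (f : ℂ) * IC Z W (conjV Z) (conjV W) = (r : ℂ))
    (Z W : Fin n → ℂ)
    (h0 : T.evalC Z W (conjV Z) (conjV W) - (f : ℂ) * IC Z W (conjV Z) (conjV W) = 0) :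
    ∃ r : ℝ, 0 ≤ r ∧ Qr T Z W (conjV Z) (conjV W) = (r : ℂ) := by
  set S := T - f • AlgCurv.constCurv
  have hS : ∀ X Y : Fin n → ℂ, S.evalC X Y (conjV X) (conjV Y)
      = T.evalC X Y (conjV X) (conjV Y) - (f : ℂ) * IC X Y (conjV X) (conjV Y) := fun X Y => by
    rw [AlgCurv.evalC_sub, AlgCurv.evalC_smul, AlgCurv.evalC_constCurv]
  have hS_nonneg : nonnegCSC S := fun X Y => by rw [hS]; exact hT X Y
  have hS_null : S.complexSectional Z W = 0 := (hS Z W).trans h0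
  have hHessian : ∀ a b, 0 ≤ T.secondVariation Z W a b := fun a b => by
    have hsplit : T.secondVariation Z W a b
        = S.secondVariation Z W a b + f * AlgCurv.constCurv.secondVariation Z W a b := by
      rw [AlgCurv.secondVariation_sub, AlgCurv.secondVariation_smul]; ring
    rw [hsplit]
    exact add_nonneg (S.secondVariation_nonneg_of_complexSectional_eq_zero hS_nonneg hS_null a b)
      (mul_nonneg (Complex.zero_le_real.mpr hf) (AlgCurv.secondVariation_constCurv_nonneg Z W a b))
  obtain ⟨r, hr, e⟩ := RCLike.nonneg_iff_exists_ofReal.mp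
    (T.Qr_conjV_nonneg_of_posSemidef (T.posSemidef_complexHessian hHessian))
  exact ⟨r, hr, e.symm⟩
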